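/- arXiv:2311.15177 — 5 statements merged into one kernel-verified Lean document; each statement's English description precedes it below -/
import Mathlib

section
/- Let n be a positive integer. The ℂ-algebra homomorphism from the polynomial ring ℂ[y₁,…,yₙ] to the polynomial ring ℂ[z₁,…,zₙ,w₁,…,wₙ] sending y_i to z_i w_i for each i is a flat ring homomorphism. -/
/-!
Every exponent `f` on `σ ⊕ σ` splits uniquely as `e + (g, g)`, where `g i = min (f (inl i)) (f (inr i))`
and `e` has, for each `i`, a zero in position `inl i` or `inr i`. Since `yᵢ ↦ zᵢwᵢ` sends the
monomial with exponent `g` to the one with exponent `(g, g)`, the monomials with such exponents `e`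
form a basis of `k[z, w]` over `k[y]`, so `k[z, w]` is even free over `k[y]`.
-/

open MvPolynomial

namespace Finsupp

variable {σ : Type*}

variable (σ) in
/-- Exponents of the monomials divisible by no `X (.inl i) * X (.inr i)`. -/
def diagFreeExps : Set (σ ⊕ σ →₀ ℕ) := {e | ∀ i, e (.inl i) = 0 ∨ e (.inr i) = 0}

noncomputable def minHalves (f : σ ⊕ σ →₀ ℕ) : σ →₀ ℕ :=
  f.comapDomain .inl Sum.inl_injective.injOn ⊓ f.comapDomain .inr Sum.inr_injective.injOn

@[simp]
lemma minHalves_apply (f : σ ⊕ σ →₀ ℕ) (i : σ) :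
    minHalves f i = min (f (.inl i)) (f (.inr i)) := rfl

variable (σ) in
noncomputable def addDiagEquiv : diagFreeExps σ × (σ →₀ ℕ) ≃ (σ ⊕ σ →₀ ℕ) where
  toFun p := p.1 + p.2.sumElim p.2
  invFun f := (⟨f - (minHalves f).sumElim (minHalves f), fun i => by
    simp only [tsub_apply, sumElim_inl, sumElim_inr, minHalves_apply]; omega⟩, minHalves f)
  left_inv := by
    rintro ⟨⟨e, he⟩, g⟩
    have hmin : minHalves (e + g.sumElim g) = g := by
      ext i
      have := he i
      simp only [minHalves_apply, add_apply, sumElim_inl, sumElim_inr]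
      omega
    ext : 1
    · ext (i | i) <;> simp [hmin]
    · exact hmin
  right_inv f := by
    ext (i | i) <;> simp

end Finsupp

namespace Module.Basis

variable {R A B ι M N : Type*} [CommSemiring R] [Semiring A] [Algebra R A]
  [AddCommMonoid B] [Module R B] [Module A B] [IsScalarTower R A B]

noncomputable def ofSMulTower (bA : Basis M R A) (bB : Basis N R B) (e : ι × M ≃ N)
    (v : ι → B) (h : ∀ i m, bA m • v i = bB (e (i, m))) : Basis ι A B :=
  -- over `R`, `linearCombination A v` carries the basis `single i (bA m)` to `bB` along `e`
  have hΨ : (Finsupp.linearCombination A v).restrictScalars R =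
      ((Finsupp.basis fun _ : ι => bA).equiv bB ((Equiv.sigmaEquivProd ι M).trans e) :
        (ι →₀ A) →ₗ[R] B) :=
    (Finsupp.basis fun _ : ι => bA).ext fun ⟨i, m⟩ => by
      rw [LinearEquiv.coe_coe, Module.Basis.equiv_apply]
      simp [h]
  .ofRepr (LinearEquiv.ofBijective (Finsupp.linearCombination A v) (by
    rw [← LinearMap.coe_restrictScalars R, hΨ]
    exact LinearEquiv.bijective _)).symm

end Module.Basis

namespace MvPolynomial

variable {k σ : Type*} [CommRing k]

theorem aeval_X_inl_mul_X_inr_monomial (g : σ →₀ ℕ) :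
    (aeval fun i => X (.inl i) * X (.inr i) : MvPolynomial σ k →ₐ[k] MvPolynomial (σ ⊕ σ) k)
      (monomial g 1) = monomial (g.sumElim g) 1 := by
  rw [aeval_monomial, map_one, one_mul, monomial_eq, C_1, one_mul, Finsupp.prod_sumElim,
    ← Finsupp.prod_mul]
  simp only [mul_pow, Function.comp_def]

theorem flat_aeval_X_inl_mul_X_inr :
    RingHom.Flat ((aeval fun i : σ => (X (.inl i) * X (.inr i) : MvPolynomial (σ ⊕ σ) k) :
      MvPolynomial σ k →ₐ[k] MvPolynomial (σ ⊕ σ) k) :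
        MvPolynomial σ k →+* MvPolynomial (σ ⊕ σ) k) := by
  let φ : MvPolynomial σ k →ₐ[k] MvPolynomial (σ ⊕ σ) k := aeval fun i => X (.inl i) * X (.inr i)
  let _ := (φ : MvPolynomial σ k →+* MvPolynomial (σ ⊕ σ) k).toAlgebra
  have : IsScalarTower k (MvPolynomial σ k) (MvPolynomial (σ ⊕ σ) k) :=
    .of_algebraMap_eq fun c => (φ.commutes c).symm
  have hbasis (e : Finsupp.diagFreeExps σ) (g : σ →₀ ℕ) :
      basisMonomials σ k g • monomial (e : σ ⊕ σ →₀ ℕ) (1 : k) =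
        basisMonomials (σ ⊕ σ) k (Finsupp.addDiagEquiv σ (e, g)) := by
    simp only [coe_basisMonomials, Algebra.smul_def, RingHom.algebraMap_toAlgebra, RingHom.coe_coe]
    rw [aeval_X_inl_mul_X_inr_monomial, monomial_mul, one_mul, add_comm]
    rfl
  have : Module.Free (MvPolynomial σ k) (MvPolynomial (σ ⊕ σ) k) :=
    .of_basis (.ofSMulTower _ _ _ _ hbasis)
  exact Module.Flat.of_free

end MvPolynomial

theorem stmt_1_general (n : ℕ) :
    RingHom.Flat ((aeval fun i : Fin n =>
      (X (Sum.inl i) * X (Sum.inr i) : MvPolynomial (Fin n ⊕ Fin n) ℂ) :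
        MvPolynomial (Fin n) ℂ →ₐ[ℂ] MvPolynomial (Fin n ⊕ Fin n) ℂ) :
      MvPolynomial (Fin n) ℂ →+* MvPolynomial (Fin n ⊕ Fin n) ℂ) :=
  MvPolynomial.flat_aeval_X_inl_mul_X_inr

/-- The `ℂ`-algebra homomorphism `ℂ[y₁,…,yₙ] → ℂ[z₁,…,zₙ,w₁,…,wₙ]`, `yᵢ ↦ zᵢwᵢ`,
is a flat ring homomorphism. -/
theorem stmt_1 (n : ℕ) (hn : 0 < n) :
    RingHom.Flat ((aeval fun i : Fin n =>
      (X (Sum.inl i) * X (Sum.inr i) : MvPolynomial (Fin n ⊕ Fin n) ℂ) :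
        MvPolynomial (Fin n) ℂ →ₐ[ℂ] MvPolynomial (Fin n ⊕ Fin n) ℂ) :
      MvPolynomial (Fin n) ℂ →+* MvPolynomial (Fin n ⊕ Fin n) ℂ) :=
  stmt_1_general n
end

section
/- Let n > d be positive integers, A a d × n integer matrix and B an n × (n−d) integer matrix such that the sequence 0 → ℤ^{n−d} →B ℤⁿ →A ℤ^d → 0 is exact. Write A = (a₁, a₂, …, aₙ) by columns, let Ā = (a₂, …, aₙ) be the d × (n−1) matrix obtained by deleting the first column, and let b₁ ∈ ℤ^{n−d} be the first row of B. Then the following are equivalent: (i) Ā has rank d and the homomorphism ℤ^{n−1} → ℤ^d determined by Ā is not surjective; (ii) b₁ is nonzero and b₁ is not a primitive vector. -/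
open Matrix Function

/-- Bezout for finite families of integers. -/
private lemma bezout_finset {ι : Type*} [DecidableEq ι] (f : ι → ℤ) (s : Finset ι) :
    ∃ c : ι → ℤ, ∑ j ∈ s, c j * f j = s.gcd f := by
  classical
  induction s using Finset.induction_on with
  | empty => exact ⟨0, by simp⟩
  | @insert a s hnot ih =>
    obtain ⟨c, hc⟩ := ih
    rw [Finset.gcd_insert]
    set g := s.gcd f with hg
    refine ⟨fun j => if j = a then Int.gcdA (f a) g else Int.gcdB (f a) g * c j, ?_⟩
    rw [Finset.sum_insert hnot]
    beta_reduce
    rw [if_pos rfl]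
    have : ∑ j ∈ s, (if j = a then Int.gcdA (f a) g else Int.gcdB (f a) g * c j) * f j
        = Int.gcdB (f a) g * ∑ j ∈ s, c j * f j := by
      rw [Finset.mul_sum]
      refine Finset.sum_congr rfl fun j hj => ?_
      rw [if_neg (by rintro rfl; exact hnot hj)]; ring
    rw [this, hc]
    have hgg := Int.gcd_eq_gcd_ab (f a) g
    have : gcd (f a) g = (Int.gcd (f a) g : ℤ) := rfl
    rw [this, hgg]; ring

private lemma mulVec_cons_eq {d m : ℕ} (A : Matrix (Fin d) (Fin (m + 1)) ℤ)
    (a : ℤ) (x : Fin m → ℤ) :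
    A.mulVec (Fin.cons a x) = fun i => A i 0 * a + (A.submatrix id Fin.succ).mulVec x i := by
  funext i
  simp [Matrix.mulVec, dotProduct, Fin.sum_univ_succ]

private lemma map_cast_mulVec {d m : ℕ} (M : Matrix (Fin d) (Fin m) ℤ) (z : Fin m → ℤ) :
    (M.map (Int.cast : ℤ → ℚ)).mulVec (fun j => (z j : ℚ)) = fun i => ((M.mulVec z i : ℤ) : ℚ) := by
  funext i
  simp [Matrix.mulVec, dotProduct, Matrix.map]

/-- **Proposition 4**, in the clean form with `n = m + 1`. -/
private lemma key {m d : ℕ} (hd : 0 < d)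
    (A : Matrix (Fin d) (Fin (m + 1)) ℤ) (B : Matrix (Fin (m + 1)) (Fin (m + 1 - d)) ℤ)
    (hAsurj : Function.Surjective A.mulVec)
    (hexact : ∀ v : Fin (m + 1) → ℤ, A.mulVec v = 0 ↔ ∃ u, B.mulVec u = v) :
    (((A.submatrix id Fin.succ).map (Int.cast : ℤ → ℚ)).rank = d ∧
      ¬ Function.Surjective (A.submatrix id Fin.succ).mulVec) ↔
    ((fun j => B 0 j) ≠ 0 ∧ Finset.univ.gcd (fun j => B 0 j) ≠ 1) := by
  classical
  set Ab := A.submatrix id Fin.succ with hAb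
  set b₁ : Fin (m + 1 - d) → ℤ := fun j => B 0 j with hb₁
  set g : ℤ := Finset.univ.gcd b₁ with hg
  -- A (B u) = 0
  have hABzero : ∀ u, A.mulVec (B.mulVec u) = 0 := fun u => (hexact _).2 ⟨u, rfl⟩
  -- first coordinate of B u is b₁ ⬝ u
  have hBu0 : ∀ u, B.mulVec u 0 = ∑ j, b₁ j * u j := fun u => by
    simp [Matrix.mulVec, dotProduct, hb₁]
  -- g divides any value b₁ ⬝ u
  have hgdvd : ∀ u : Fin (m + 1 - d) → ℤ, g ∣ ∑ j, b₁ j * u j := fun u =>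
    Finset.dvd_sum fun j _ => Dvd.dvd.mul_right (Finset.gcd_dvd (Finset.mem_univ j)) _
  have hgnonneg : 0 ≤ g := Int.nonneg_of_normalize_eq_self (Finset.normalize_gcd)
  -- part (b): surjectivity ↔ g = 1
  have hsurj_iff : Function.Surjective Ab.mulVec ↔ g = 1 := by
    constructor
    · intro hs
      obtain ⟨x, hx⟩ := hs (fun i => A i 0)
      have hA0 : A.mulVec (Fin.cons 1 (-x)) = 0 := by
        rw [mulVec_cons_eq, ← hAb, Matrix.mulVec_neg, hx]
        funext i; simp
      obtain ⟨u, hu⟩ := (hexact _).1 hA0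
      have h1 : ∑ j, b₁ j * u j = 1 := by
        rw [← hBu0 u, hu]; simp
      have : g ∣ 1 := h1 ▸ hgdvd u
      have := Int.isUnit_iff.1 (isUnit_of_dvd_one this)
      rcases this with h | h
      · exact h
      · omega
    · intro hg1 y
      obtain ⟨x, hx⟩ := hAsurj y
      obtain ⟨c, hc⟩ := bezout_finset b₁ Finset.univ
      rw [← hg, hg1] at hc
      set u := (x 0) • c with hu
      have hBu : B.mulVec u 0 = x 0 := by
        rw [hBu0]
        have : ∑ j, b₁ j * u j = x 0 * ∑ j, c j * b₁ j := by
          rw [Finset.mul_sum]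
          exact Finset.sum_congr rfl fun j _ => by simp [hu]; ring
        rw [this, hc, mul_one]
      set v := x - B.mulVec u with hv
      have hv0 : v 0 = 0 := by simp [hv, hBu]
      have hAv : A.mulVec v = y := by
        rw [hv, Matrix.mulVec_sub, hABzero, hx, sub_zero]
      refine ⟨Fin.tail v, ?_⟩
      have hct : Fin.cons (0 : ℤ) (Fin.tail v) = v := by
        rw [← hv0]; exact Fin.cons_self_tail v
      have hcons : A.mulVec (Fin.cons 0 (Fin.tail v)) = y := by
        rw [hct, hAv]
      rw [mulVec_cons_eq] at hcons
      funext i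
      have := congrFun hcons i
      simpa using this
  -- part (a): rank = d ↔ b₁ ≠ 0
  have hrank_iff : ((Ab.map (Int.cast : ℤ → ℚ)).rank = d) ↔ b₁ ≠ 0 := by
    constructor
    · intro hr
      intro hb0
      -- from rank = d, range is top, so cast of first column is in the range
      have htop : LinearMap.range (Ab.map (Int.cast : ℤ → ℚ)).mulVecLin = ⊤ := by
        apply Submodule.eq_top_of_finrank_eq
        rw [← Matrix.rank, hr, Module.finrank_fintype_fun_eq_card, Fintype.card_fin]
      have hmem : (fun i => ((A i 0 : ℤ) : ℚ)) ∈
          LinearMap.range (Ab.map (Int.cast : ℤ → ℚ)).mulVecLin := htop ▸ Submodule.mem_top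
      obtain ⟨x, hx⟩ := hmem
      -- clear denominators
      set q : ℕ := ∏ j, (x j).den with hq
      have hqpos : 0 < q := Finset.prod_pos fun j _ => (x j).pos
      have hint : ∀ j, ∃ z : ℤ, (z : ℚ) = x j * q := by
        intro j
        obtain ⟨t, ht⟩ := Finset.dvd_prod_of_mem (fun j => (x j).den) (Finset.mem_univ j)
        refine ⟨(x j).num * t, ?_⟩
        have hden : ((x j).den : ℚ) ≠ 0 := Nat.cast_ne_zero.2 (x j).den_nz
        rw [← hq] at ht
        have h1 : ((x j).num : ℚ) / ((x j).den : ℚ) * ((x j).den : ℚ) = ((x j).num : ℚ) :=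
          div_mul_cancel₀ _ hden
        rw [Rat.num_div_den] at h1
        push_cast [ht]
        rw [← h1]; ring
      choose c hc using hint
      -- cast equality : Ab.mulVec c = q • a₁
      have hcastv : (Ab.map (Int.cast : ℤ → ℚ)).mulVec (fun j => (c j : ℚ))
          = fun i => ((q : ℚ) * (A i 0 : ℚ)) := by
        have h1 : (fun j => (c j : ℚ)) = (q : ℚ) • x := by
          funext j; rw [hc j]; simp [mul_comm]
        rw [h1, Matrix.mulVec_smul]
        have hx' : (Ab.map (Int.cast : ℤ → ℚ)).mulVec x = fun i => ((A i 0 : ℤ) : ℚ) := hx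
        rw [hx']
        funext i; simp
      have hint_eq : Ab.mulVec c = fun i => (q : ℤ) * A i 0 := by
        funext i
        have := congrFun ((map_cast_mulVec Ab c).symm.trans hcastv) i
        exact_mod_cast this
      -- build kernel vector
      have hker : A.mulVec (Fin.cons (-(q : ℤ)) c) = 0 := by
        rw [mulVec_cons_eq]
        funext i
        rw [← hAb]
        simp [congrFun hint_eq i]
        ring
      obtain ⟨u, hu⟩ := (hexact _).1 hker
      have : B.mulVec u 0 = -(q : ℤ) := by rw [hu]; simp
      rw [hBu0] at this
      have hzero : ∑ j, b₁ j * u j = 0 := by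
        refine Finset.sum_eq_zero fun j _ => ?_
        have : b₁ j = 0 := congrFun hb0 j
        rw [this, zero_mul]
      omega
    · intro hb0
      -- b₁ ≠ 0 gives a kernel relation with nonzero first coordinate
      obtain ⟨j₀, hj₀⟩ : ∃ j, b₁ j ≠ 0 := by
        by_contra h
        push_neg at h
        exact hb0 (funext h)
      set w := B.mulVec (Pi.single j₀ 1) with hw
      have hw0 : w 0 = b₁ j₀ := by
        rw [hw, hBu0]
        rw [Finset.sum_eq_single j₀ (fun j _ hne => by simp [Pi.single_eq_of_ne hne])
          (fun h => absurd (Finset.mem_univ j₀) h)]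
        simp
      have hAw : A.mulVec w = 0 := hABzero _
      -- show range over ℚ is top
      have htop : LinearMap.range (Ab.map (Int.cast : ℤ → ℚ)).mulVecLin = ⊤ := by
        rw [Submodule.eq_top_iff']
        intro y
        have hsingle : ∀ i : Fin d, (Pi.single i 1 : Fin d → ℚ) ∈
            LinearMap.range (Ab.map (Int.cast : ℤ → ℚ)).mulVecLin := by
          intro i
          obtain ⟨x, hx⟩ := hAsurj (Pi.single i 1)
          set cI : ℤ := b₁ j₀ with hcI
          set x' := cI • x - (x 0) • w with hx'
          have hx'0 : x' 0 = 0 := by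
            simp [hx', hw0, hcI]
            ring
          have hAx' : A.mulVec x' = fun k => cI * (Pi.single i 1 : Fin d → ℤ) k := by
            rw [hx', Matrix.mulVec_sub, Matrix.mulVec_smul, Matrix.mulVec_smul, hx, hAw]
            funext k; simp
          have hAbx : Ab.mulVec (Fin.tail x') = fun k => cI * (Pi.single i 1 : Fin d → ℤ) k := by
            have hct : Fin.cons (0 : ℤ) (Fin.tail x') = x' := by
              rw [← hx'0]; exact Fin.cons_self_tail x'
            have hcons : A.mulVec (Fin.cons 0 (Fin.tail x')) =
                fun k => cI * (Pi.single i 1 : Fin d → ℤ) k := by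
              rw [hct, hAx']
            rw [mulVec_cons_eq] at hcons
            funext k
            have := congrFun hcons k
            rw [← hAb] at this
            simpa using this
          refine ⟨(cI : ℚ)⁻¹ • fun j => ((Fin.tail x' j : ℤ) : ℚ), ?_⟩
          have : (Ab.map (Int.cast : ℤ → ℚ)).mulVecLin (fun j => ((Fin.tail x' j : ℤ) : ℚ))
              = fun k => ((cI : ℚ) * (Pi.single i 1 : Fin d → ℚ) k) := by
            show (Ab.map (Int.cast : ℤ → ℚ)).mulVec _ = _
            rw [map_cast_mulVec]
            funext k
            rw [congrFun hAbx k]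
            push_cast
            rcases eq_or_ne k i with rfl | hki
            · simp
            · simp [Pi.single_eq_of_ne hki]
          rw [LinearMap.map_smul, this]
          funext k
          have hcQ : (cI : ℚ) ≠ 0 := Int.cast_ne_zero.2 hj₀
          simp [Pi.smul_apply]
          rcases eq_or_ne k i with rfl | hki
          · simp [hcQ]
          · simp [Pi.single_eq_of_ne hki]
        have hy : y = ∑ i, y i • (Pi.single i 1 : Fin d → ℚ) := by
          funext k
          rw [Finset.sum_apply]
          rw [Finset.sum_eq_single k (fun i _ hne => by simp [Pi.single_eq_of_ne (Ne.symm hne)])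
            (fun h => absurd (Finset.mem_univ k) h)]
          simp
        rw [hy]
        exact Submodule.sum_mem _ fun i _ => Submodule.smul_mem _ _ (hsingle i)
      rw [Matrix.rank, htop, finrank_top, Module.finrank_fintype_fun_eq_card, Fintype.card_fin]
  rw [hrank_iff, hsurj_iff]

/-- **Proposition 4.** Given an exact sequence `0 → ℤ^{n-d} → ℤⁿ → ℤ^d → 0` determined by
integer matrices `B` and `A`, the following are equivalent: (i) the matrix `Ā` obtained from
`A` by deleting its first column has rank `d` over `ℚ` but does not determine a surjection
`ℤ^{n-1} → ℤ^d`; (ii) the first row of `B` is nonzero and is not a primitive vector. -/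
theorem stmt_2 (n d : ℕ) (hd : 0 < d) (hdn : d < n)
    (A : Matrix (Fin d) (Fin n) ℤ) (B : Matrix (Fin n) (Fin (n - d)) ℤ)
    (hBinj : Function.Injective B.mulVec)
    (hAsurj : Function.Surjective A.mulVec)
    (hexact : ∀ v : Fin n → ℤ, A.mulVec v = 0 ↔ ∃ u, B.mulVec u = v) :
    ((((A.submatrix id fun j : Fin (n - 1) =>
          Fin.cast (by omega) j.succ).map (Int.cast : ℤ → ℚ)).rank = d ∧
      ¬ Function.Surjective
        (A.submatrix id fun j : Fin (n - 1) => Fin.cast (by omega) j.succ).mulVec) ↔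
    ((fun j => B ⟨0, by omega⟩ j) ≠ 0 ∧
      Finset.univ.gcd (fun j => B ⟨0, by omega⟩ j) ≠ 1)) := by
  obtain ⟨m, rfl⟩ : ∃ m, n = m + 1 := ⟨n - 1, by omega⟩
  show (((A.submatrix id Fin.succ).map (Int.cast : ℤ → ℚ)).rank = d ∧
      ¬ Function.Surjective (A.submatrix id Fin.succ).mulVec) ↔
    ((fun j => B 0 j) ≠ 0 ∧ Finset.univ.gcd (fun j => B 0 j) ≠ 1)
  exact key hd A B hAsurj hexact
end

section
/- Let d ≥ 1 and n ≥ d + 1, let c ∈ ℤ^d be a column vector, and let m₁, …, m_d be positive integers such that m_i divides m_{i−1} for 2 ≤ i ≤ d. Let M be the d × n integer matrix whose first column is c, whose columns 2 through d+1 form the diagonal matrix diag(m₁, …, m_d), and whose remaining columns are zero. If the homomorphism ℤⁿ → ℤ^d determined by M is surjective, then m₂ = m₃ = ⋯ = m_d = 1 and gcd(c₁, m₁) = 1, where c₁ is the first entry of c. -/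
/-!
Indices start at 0. Row `i` of `M v` is `cᵢ v₀ + mᵢ vᵢ₊₁`, so a preimage `v` of `e₀` gives
`c₀ v₀ + m₀ v₁ = 1`: this is the coprimality of `c₀` and `m₀`, and it makes `v₀` a unit modulo
`m₁ ∣ m₀`. Row 1 of the same `v` reads `c₁ v₀ ≡ 0 (mod m₁)`, so `m₁ ∣ c₁`; but a preimage `w` of
`e₁` gives `c₁ w₀ ≡ 1 (mod m₁)`. Hence `m₁ = 1`, and every later `mᵢ` divides `m₁`.
-/

theorem dvd_of_le_of_forall_succ_dvd {α : Type*} [Monoid α] {d : ℕ} {m : Fin d → α}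
    (hchain : ∀ i : Fin d, ∀ h : (i : ℕ) + 1 < d, m ⟨(i : ℕ) + 1, h⟩ ∣ m i)
    {i j : Fin d} (hij : i ≤ j) : m j ∣ m i := by
  obtain ⟨k, hk⟩ := Nat.exists_eq_add_of_le (Fin.le_def.mp hij)
  induction k generalizing j with
  | zero => rw [show j = i from Fin.ext (by simpa using hk)]
  | succ k ih =>
    have hjk : (i : ℕ) + k + 1 < d := by omega
    obtain rfl : j = ⟨(i : ℕ) + k + 1, hjk⟩ := Fin.ext (by simp [hk, add_assoc])
    exact (hchain ⟨(i : ℕ) + k, by omega⟩ hjk).trans (ih (Fin.le_def.mpr (by simp)) rfl)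

section ShiftedDiagonal

variable {R : Type*} [CommRing R] {d n : ℕ} {c m : Fin d → R} {M : Matrix (Fin d) (Fin n) R}

theorem mulVec_apply_of_shiftedDiagonal (hn : d + 1 ≤ n)
    (hM : ∀ (i : Fin d) (j : Fin n),
      M i j = if (j : ℕ) = (i : ℕ) + 1 then m i else if (j : ℕ) = 0 then c i else 0)
    (v : Fin n → R) (i : Fin d) :
    M.mulVec v i = c i * v ⟨0, by omega⟩ + m i * v ⟨(i : ℕ) + 1, by omega⟩ := by
  rw [Matrix.mulVec, dotProduct,
    Finset.sum_eq_add_of_mem ⟨0, by omega⟩ ⟨(i : ℕ) + 1, by omega⟩ (Finset.mem_univ _)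
      (Finset.mem_univ _) (by simp [Fin.ext_iff])]
  · simp [hM]
  · rintro j - ⟨hj0, hj1⟩
    rw [hM, if_neg (fun h => hj1 (Fin.ext h)), if_neg (fun h => hj0 (Fin.ext h)), zero_mul]

variable (hn : d + 1 ≤ n)
    (hM : ∀ (i : Fin d) (j : Fin n),
      M i j = if (j : ℕ) = (i : ℕ) + 1 then m i else if (j : ℕ) = 0 then c i else 0)
    (hsurj : Function.Surjective M.mulVec)
include hn hM hsurj

theorem isCoprime_of_surjective_shiftedDiagonal (hd : 0 < d) :
    IsCoprime (c ⟨0, hd⟩) (m ⟨0, hd⟩) := by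
  obtain ⟨v, hv⟩ := hsurj (Pi.single ⟨0, hd⟩ 1)
  have hrow := mulVec_apply_of_shiftedDiagonal hn hM v ⟨0, hd⟩
  rw [hv, Pi.single_eq_same] at hrow
  exact ⟨v _, v _, by rw [mul_comm, mul_comm (v _), ← hrow]⟩

theorem dvd_one_of_surjective_shiftedDiagonal (hd : 1 < d)
    (hdvd : m ⟨1, hd⟩ ∣ m ⟨0, by omega⟩) : m ⟨1, hd⟩ ∣ 1 := by
  obtain ⟨v, hv⟩ := hsurj (Pi.single ⟨0, by omega⟩ 1)
  obtain ⟨w, hw⟩ := hsurj (Pi.single ⟨1, hd⟩ 1)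
  have hv₀ := mulVec_apply_of_shiftedDiagonal hn hM v ⟨0, by omega⟩
  have hv₁ := mulVec_apply_of_shiftedDiagonal hn hM v ⟨1, hd⟩
  have hw₁ := mulVec_apply_of_shiftedDiagonal hn hM w ⟨1, hd⟩
  rw [hv, Pi.single_eq_same] at hv₀
  rw [hv, Pi.single_eq_of_ne (by simp [Fin.ext_iff])] at hv₁
  rw [hw, Pi.single_eq_same] at hw₁
  simp only [Nat.reduceAdd] at hv₀ hv₁ hw₁
  have hcop : IsCoprime (m ⟨1, hd⟩) (v ⟨0, by omega⟩) :=
    (IsCoprime.of_isCoprime_of_dvd_right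
      ⟨c ⟨0, by omega⟩, v ⟨1, by omega⟩, by linear_combination -hv₀⟩ hdvd).symm
  have hc₁ : m ⟨1, hd⟩ ∣ c ⟨1, hd⟩ :=
    hcop.dvd_of_dvd_mul_right ⟨-v ⟨2, by omega⟩, by linear_combination -hv₁⟩
  rw [hw₁]
  exact dvd_add (hc₁.mul_right _) (dvd_mul_right _ _)

end ShiftedDiagonal

/-- Smith-normal-form step of Lemma 5: if the `d × n` matrix `M = (c, diag(m₁,…,m_d), 0)`
(first column `c`, then the diagonal matrix with entries `m₁,…,m_d` satisfying `mᵢ ∣ mᵢ₋₁`,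
then zero columns) determines a surjection `ℤⁿ → ℤ^d`, then `m₂ = ⋯ = m_d = 1` and
`gcd(c₁, m₁) = 1`. -/
theorem stmt_6 (d n : ℕ) (hd : 0 < d) (hn : d + 1 ≤ n)
    (c : Fin d → ℤ) (m : Fin d → ℤ) (hmpos : ∀ i, 0 < m i)
    (hchain : ∀ i : Fin d, ∀ h : (i : ℕ) + 1 < d, m ⟨(i : ℕ) + 1, h⟩ ∣ m i)
    (M : Matrix (Fin d) (Fin n) ℤ)
    (hM : ∀ (i : Fin d) (j : Fin n),
      M i j = if (j : ℕ) = (i : ℕ) + 1 then m i else if (j : ℕ) = 0 then c i else 0)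
    (hsurj : Function.Surjective M.mulVec) :
    (∀ i : Fin d, 0 < (i : ℕ) → m i = 1) ∧
      Int.gcd (c ⟨0, hd⟩) (m ⟨0, hd⟩) = 1 := by
  refine ⟨fun i hi => ?_, Int.isCoprime_iff_gcd_eq_one.mp
    (isCoprime_of_surjective_shiftedDiagonal hn hM hsurj hd)⟩
  have h1d : 1 < d := by omega
  have hm₁ : m ⟨1, h1d⟩ ∣ 1 :=
    dvd_one_of_surjective_shiftedDiagonal hn hM hsurj h1d (hchain ⟨0, hd⟩ h1d)
  have hmi : m i ∣ m ⟨1, h1d⟩ :=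
    dvd_of_le_of_forall_succ_dvd hchain (show (⟨1, h1d⟩ : Fin d) ≤ i from Fin.le_def.mpr hi)
  exact Int.eq_one_of_dvd_one (hmpos i).le (hmi.trans hm₁)
end

section
/- Let n > d be positive integers, m > 1 an integer, and a_{ij} (1 ≤ i ≤ d, 1 ≤ j ≤ n) integers. Assume that the d × n matrix A with first row (a₁₁, m·a₁₂, …, m·a₁ₙ) and i-th row (a_{i1}, …, a_{in}) for 2 ≤ i ≤ d determines a surjection ℤⁿ → ℤ^d, and that the d × n matrix with first row (1, a₁₂, …, a₁ₙ) and i-th row (0, a_{i2}, …, a_{in}) for 2 ≤ i ≤ d also determines a surjection ℤⁿ → ℤ^d. Define the (d+m−1) × (n+m−1) integer matrix A′ as follows: row 1 is (a₁₁, 0, …, 0, a₁₂, …, a₁ₙ) (with m−1 zeros in columns 2 through m); for 2 ≤ i ≤ d, row i is (a_{i1}, a_{i1}, …, a_{i1}, a_{i2}, …, a_{in}) (with a_{i1} repeated in columns 1 through m); for 1 ≤ k ≤ m−1, row d+k has entry 1 in column k, entry −1 in column k+1, and 0 elsewhere. Then A′ determines a surjection ℤ^{n+m−1} → ℤ^{d+m−1}.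 -/
/-!
On a preimage `x` of `y` under `A'`, the last `m - 1` rows prescribe the consecutive differences
of the first `m` coordinates of `x`, so these are `c - q_t` with `q` the partial sums of the last
`m - 1` entries of `y`. The first `d` rows then read `C (c, x_m, …) = y + (multiples of ∑ q_t)`,
where `C` is `a` with its first column multiplied by `m` below the first row; so it suffices that
`C` is surjective. Since `C · diag(1, m, …, m) = diag(1, m, …, m) · A`, the vector `e₁` lies in
the image of `C`, and replacing the first column of `C` by `e₁` gives the second matrix of the
hypothesis, which is surjective.
-/

open Matrix Function

section ColumnSpan

variable {R ι κ : Type*} [CommRing R] [Fintype κ]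

theorem Matrix.mulVec_surjective_of_updateCol [DecidableEq κ] {M : Matrix ι κ R} {j₀ : κ}
    {v : ι → R} (hv : v ∈ Set.range M.mulVec) (hs : Surjective (M.updateCol j₀ v).mulVec) :
    Surjective M.mulVec := by
  have hs' : LinearMap.range (M.updateCol j₀ v).mulVecLin = ⊤ := LinearMap.range_eq_top.2 hs
  rw [← coe_mulVecLin, ← LinearMap.range_eq_top, eq_top_iff, ← hs', range_mulVecLin,
    Submodule.span_le, Set.range_subset_iff]
  intro j
  obtain rfl | hj := eq_or_ne j j₀
  · rw [show (M.updateCol j v).col j = v from funext fun _ => updateCol_self]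
    exact hv
  · refine LinearMap.mem_range.2 ⟨Pi.single j 1, ?_⟩
    ext i
    simp [updateCol_ne hj]

theorem Matrix.mulVec_surjective_submatrix {ι' κ' : Type*} [Fintype κ'] {M : Matrix ι κ R}
    (h : Surjective M.mulVec) (e₁ : ι' ≃ ι) (e₂ : κ' ≃ κ) :
    Surjective (M.submatrix e₁ e₂).mulVec := by
  intro y
  obtain ⟨x, hx⟩ := h (y ∘ e₁.symm)
  refine ⟨x ∘ e₂, ?_⟩
  rw [submatrix_mulVec_equiv, comp_assoc, e₂.self_comp_symm, comp_id, hx, comp_assoc,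
    e₁.symm_comp_self, comp_id]

theorem mulVec_surjective_scaleCol_of_scaleRow [DecidableEq ι] [DecidableEq κ] {i₀ : ι} {j₀ : κ}
    (μ : R) (a : Matrix ι κ R)
    (hA : Surjective (mulVec <| of fun i j => if i = i₀ ∧ j ≠ j₀ then μ * a i j else a i j))
    (hA₁ : Surjective
      (mulVec <| of fun i j => if j = j₀ then (if i = i₀ then 1 else 0) else a i j)) :
    Surjective (mulVec <| of fun i j => if j = j₀ ∧ i ≠ i₀ then μ * a i j else a i j) := by
  set A : Matrix ι κ R := of fun i j => if i = i₀ ∧ j ≠ j₀ then μ * a i j else a i j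
  set C : Matrix ι κ R := of fun i j => if j = j₀ ∧ i ≠ i₀ then μ * a i j else a i j
  have hscale (u : κ → R) (i : ι) :
      (C *ᵥ fun j => (if j = j₀ then 1 else μ) * u j) i =
        (if i = i₀ then 1 else μ) * (A *ᵥ u) i := by
    simp only [C, A, mulVec, dotProduct, of_apply, Finset.mul_sum]
    refine Finset.sum_congr rfl fun j _ => ?_
    split_ifs <;> simp_all <;> ring
  refine mulVec_surjective_of_updateCol (v := Pi.single i₀ 1) (j₀ := j₀) ?_ ?_
  · obtain ⟨u, hu⟩ := hA (Pi.single i₀ 1)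
    refine ⟨fun j => (if j = j₀ then 1 else μ) * u j, funext fun i => ?_⟩
    rw [hscale, hu]
    by_cases hi : i = i₀ <;> simp [hi]
  · convert hA₁ using 2
    ext i j
    by_cases hj : j = j₀ <;> simp [C, hj, Pi.single_apply]

end ColumnSpan

def diffMatrix (R : Type*) [Ring R] (m : ℕ) : Matrix (Fin m) (Fin (m + 1)) R :=
  of fun k => Pi.single k.castSucc 1 - Pi.single k.succ 1

theorem diffMatrix_mulVec {R : Type*} [Ring R] (m : ℕ) (x : Fin (m + 1) → R) :
    diffMatrix R m *ᵥ x = fun k => x k.castSucc - x k.succ := by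
  ext k
  change (Pi.single k.castSucc 1 - Pi.single k.succ 1 : Fin (m + 1) → R) ⬝ᵥ x = _
  rw [sub_dotProduct, single_dotProduct, single_dotProduct, one_mul, one_mul]

section Enlarged

variable {R ι : Type*} [CommRing R] [DecidableEq ι]

theorem mulVec_of_ite_eq_and_ne_zero (i₀ : ι) (b : ι → R) {m : ℕ} (x : Fin (m + 1) → R) :
    (of fun i t => if i = i₀ ∧ t ≠ 0 then 0 else b i) *ᵥ x =
      fun i => if i = i₀ then b i * x 0 else b i * ∑ t, x t := by
  ext i
  by_cases hi : i = i₀ <;> simp [mulVec, dotProduct, hi, Finset.mul_sum]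

/-- The matrix `A'` of the paper in block form, with `n + 1` and `m + 1` in place of the paper's
`n` and `m`. -/
def enlargedMatrix (i₀ : ι) {n : ℕ} (a : Matrix ι (Fin (n + 1)) R) (m : ℕ) :
    Matrix (ι ⊕ Fin m) (Fin (m + 1) ⊕ Fin n) R :=
  fromBlocks (of fun i t => if i = i₀ ∧ t ≠ 0 then 0 else a i 0) (of fun i s => a i s.succ)
    (diffMatrix R m) 0

theorem mulVec_surjective_enlargedMatrix {i₀ : ι} {n : ℕ} {a : Matrix ι (Fin (n + 1)) R} {m : ℕ}
    (hC : Surjective (mulVec <| of fun i j =>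
      if j = 0 ∧ i ≠ i₀ then ((m + 1 : ℕ) : R) * a i j else a i j)) :
    Surjective (enlargedMatrix i₀ a m).mulVec := by
  intro y
  set q := Fin.partialSum (y ∘ Sum.inr)
  set P := ∑ t, q t
  obtain ⟨u, hu⟩ := hC fun i => y (.inl i) + if i = i₀ then 0 else a i 0 * P
  refine ⟨Sum.elim (fun t => u 0 - q t) (Fin.tail u), ?_⟩
  rw [enlargedMatrix, fromBlocks_mulVec]
  ext (i | k)
  · have hi := congrFun hu i
    simp only [mulVec, dotProduct, of_apply, Fin.sum_univ_succ, Fin.succ_ne_zero, false_and,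
      if_false, true_and] at hi
    simp only [Sum.elim_inl, Sum.elim_comp_inl, Sum.elim_comp_inr, Pi.add_apply,
      mulVec_of_ite_eq_and_ne_zero, Finset.sum_sub_distrib, Finset.sum_const, Finset.card_univ,
      Fintype.card_fin, nsmul_eq_mul, show q 0 = 0 from Fin.partialSum_zero _]
    simp only [mulVec, dotProduct, of_apply, Fin.tail]
    by_cases h : i = i₀ <;>
      simp only [h, ne_eq, not_true, not_false_eq_true, ↓reduceIte] at hi ⊢ <;>
      linear_combination hi
  · simp [diffMatrix_mulVec, q, Fin.partialSum_succ]

end Enlarged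

/-- **Lemma 6.** Suppose the `d × n` matrix `A` with first row `(a₁₁, m·a₁₂, …, m·a₁ₙ)` and
`i`-th row `(aᵢ₁, …, aᵢₙ)` (for `2 ≤ i ≤ d`) determines a surjection `ℤⁿ → ℤ^d`, and so does
the matrix with first row `(1, a₁₂, …, a₁ₙ)` and `i`-th row `(0, aᵢ₂, …, aᵢₙ)`. Then the
enlarged `(d+m-1) × (n+m-1)` matrix `A'` (with row 1 equal to `(a₁₁, 0, …, 0, a₁₂, …, a₁ₙ)`,
row `i` equal to `(aᵢ₁, …, aᵢ₁, aᵢ₂, …, aᵢₙ)` with `aᵢ₁` repeated `m` times, and rows `d+k`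
for `1 ≤ k ≤ m-1` having `1` in column `k`, `-1` in column `k+1` and `0` elsewhere)
determines a surjection `ℤ^{n+m-1} → ℤ^{d+m-1}`. -/
theorem stmt_8 (d n m : ℕ) (hd : 0 < d) (hdn : d < n) (hm : 1 < m)
    (a : Matrix (Fin d) (Fin n) ℤ)
    (hAsurj : Function.Surjective (Matrix.mulVec (fun (i : Fin d) (j : Fin n) =>
      if (i : ℕ) = 0 ∧ (j : ℕ) ≠ 0 then (m : ℤ) * a i j else a i j)))
    (hA1surj : Function.Surjective (Matrix.mulVec (fun (i : Fin d) (j : Fin n) =>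
      if (j : ℕ) = 0 then (if (i : ℕ) = 0 then 1 else 0) else a i j)))
    (A' : Matrix (Fin (d + m - 1)) (Fin (n + m - 1)) ℤ)
    (hA' : ∀ (i : Fin (d + m - 1)) (j : Fin (n + m - 1)),
      A' i j =
        if hi : (i : ℕ) < d then
          if (j : ℕ) < m then
            (if (i : ℕ) = 0 then
              (if (j : ℕ) = 0 then a ⟨(i : ℕ), hi⟩ ⟨0, by omega⟩ else 0)
            else a ⟨(i : ℕ), hi⟩ ⟨0, by omega⟩)
          else a ⟨(i : ℕ), hi⟩ ⟨(j : ℕ) - m + 1, by have := j.isLt; omega⟩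
        else
          if (j : ℕ) = (i : ℕ) - d then 1
          else if (j : ℕ) = (i : ℕ) - d + 1 then -1 else 0) :
    Function.Surjective A'.mulVec := by
  obtain ⟨d, rfl⟩ : ∃ d', d = d' + 1 := ⟨d - 1, by omega⟩
  obtain ⟨n, rfl⟩ : ∃ n', n = n' + 1 := ⟨n - 1, by omega⟩
  obtain ⟨m, rfl⟩ : ∃ m', m = m' + 1 := ⟨m - 1, by omega⟩
  simp only [Fin.val_eq_zero_iff, Fin.val_ne_zero_iff] at hAsurj hA1surj
  have hC := mulVec_surjective_scaleCol_of_scaleRow _ a hAsurj hA1surj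
  let e₁ : Fin (d + 1 + (m + 1) - 1) ≃ Fin (d + 1) ⊕ Fin m :=
    (finCongr (by omega)).trans finSumFinEquiv.symm
  let e₂ : Fin (n + 1 + (m + 1) - 1) ≃ Fin (m + 1) ⊕ Fin n :=
    (finCongr (by omega)).trans finSumFinEquiv.symm
  have hA'e : A' = (enlargedMatrix 0 a m).submatrix e₁ e₂ := by
    ext i j
    obtain ⟨r, rfl⟩ := e₁.symm.surjective i
    obtain ⟨s, rfl⟩ := e₂.symm.surjective j
    rcases r with i | k <;> rcases s with t | s <;>
      simp [hA', e₁, e₂, enlargedMatrix, diffMatrix, Pi.single_apply, Fin.is_le,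
        Fin.ext_iff, -Fin.val_eq_zero_iff] <;>
      split_ifs <;> first | rfl | omega
  rw [hA'e]
  exact mulVec_surjective_submatrix (mulVec_surjective_enlargedMatrix hC) e₁ e₂
end

section
/- Let m > 1 be an integer and let A be a d × n integer matrix whose first row is (a₁₁, m·a₁₂, …, m·a₁ₙ) with gcd(a₁₁, m) = 1. Let I = (i₁, …, iₙ) and J = (j₁, …, jₙ) be n-tuples of non-negative integers such that A·(I − J) = 0 in ℤ^d. Then the monomial z₁^{i₁}⋯zₙ^{iₙ}·w₁^{j₁}⋯wₙ^{jₙ} of the polynomial ring ℂ[z₁,…,zₙ,w₁,…,wₙ] belongs to the ℂ-subalgebra generated by z₁^m, w₁^m, the products z₁w₁, z₂w₂, …, zₙwₙ, and the variables z₂, …, zₙ, w₂, …, wₙ. -/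
open MvPolynomial

/-- **Claim 8** (monomial version). Let `m > 1` and let `A` be a `d × n` integer matrix whose
first row is `(a₁₁, m·a₁₂, …, m·a₁ₙ)` with `gcd(a₁₁, m) = 1`. If `I, J` are `n`-tuples of
non-negative integers with `A·(I - J) = 0`, then the monomial `z^I w^J` lies in the
`ℂ`-subalgebra of `ℂ[z₁,…,zₙ,w₁,…,wₙ]` generated by `z₁^m`, `w₁^m`, the products `zⱼwⱼ`, and
the variables `z₂,…,zₙ,w₂,…,wₙ`. -/
theorem stmt_10 (d n : ℕ) (hd : 0 < d) (hn : 0 < n) (m : ℕ) (hm : 1 < m)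
    (A : Matrix (Fin d) (Fin n) ℤ)
    (hrow : ∀ j : Fin n, j ≠ ⟨0, hn⟩ → (m : ℤ) ∣ A ⟨0, hd⟩ j)
    (hgcd : Int.gcd (A ⟨0, hd⟩ ⟨0, hn⟩) (m : ℤ) = 1)
    (I J : Fin n → ℕ)
    (hIJ : A.mulVec (fun j => (I j : ℤ) - (J j : ℤ)) = 0) :
    ((∏ j : Fin n, (X (Sum.inl j) : MvPolynomial (Fin n ⊕ Fin n) ℂ) ^ I j) *
        ∏ j : Fin n, (X (Sum.inr j) : MvPolynomial (Fin n ⊕ Fin n) ℂ) ^ J j) ∈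
      Algebra.adjoin ℂ
        ({X (Sum.inl ⟨0, hn⟩) ^ m, X (Sum.inr ⟨0, hn⟩) ^ m} ∪
          (Set.range fun j : Fin n =>
            (X (Sum.inl j) * X (Sum.inr j) : MvPolynomial (Fin n ⊕ Fin n) ℂ)) ∪
          {p | ∃ j : Fin n, j ≠ ⟨0, hn⟩ ∧
            (p = X (Sum.inl j) ∨ p = X (Sum.inr j))}) := by
  set j0 : Fin n := ⟨0, hn⟩ with hj0
  set S : Set (MvPolynomial (Fin n ⊕ Fin n) ℂ) :=
    ({X (Sum.inl j0) ^ m, X (Sum.inr j0) ^ m} ∪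
      (Set.range fun j : Fin n =>
        (X (Sum.inl j) * X (Sum.inr j) : MvPolynomial (Fin n ⊕ Fin n) ℂ)) ∪
      {p | ∃ j : Fin n, j ≠ j0 ∧
        (p = X (Sum.inl j) ∨ p = X (Sum.inr j))}) with hS
  have hz0 : (X (Sum.inl j0) : MvPolynomial (Fin n ⊕ Fin n) ℂ) ^ m ∈ S := by
    left; left; left; rfl
  have hw0 : (X (Sum.inr j0) : MvPolynomial (Fin n ⊕ Fin n) ℂ) ^ m ∈ S := by
    left; left; right; rfl
  have hzw : ∀ j : Fin n,
      (X (Sum.inl j) * X (Sum.inr j) : MvPolynomial (Fin n ⊕ Fin n) ℂ) ∈ S := by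
    intro j; left; right; exact ⟨j, rfl⟩
  -- divisibility at the first row
  have hv : (m : ℤ) ∣ (I j0 : ℤ) - J j0 := by
    have h0 := congrFun hIJ ⟨0, hd⟩
    simp only [Matrix.mulVec, dotProduct, Pi.zero_apply] at h0
    rw [← Finset.add_sum_erase Finset.univ _ (Finset.mem_univ j0)] at h0
    have hdvd : (m : ℤ) ∣ A ⟨0, hd⟩ j0 * ((I j0 : ℤ) - J j0) := by
      have : A ⟨0, hd⟩ j0 * ((I j0 : ℤ) - J j0) =
          - ∑ j ∈ Finset.univ.erase j0, A ⟨0, hd⟩ j * ((I j : ℤ) - J j) := by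
        linarith
      rw [this]
      exact dvd_neg.mpr (Finset.dvd_sum fun j hj =>
        Dvd.dvd.mul_right (hrow j (Finset.ne_of_mem_erase hj)) _)
    have hcop : IsCoprime ((m : ℤ)) (A ⟨0, hd⟩ j0) := by
      rw [Int.isCoprime_iff_gcd_eq_one, Int.gcd_comm]
      exact hgcd
    exact (IsCoprime.dvd_of_dvd_mul_left hcop hdvd)
  rw [← Finset.prod_mul_distrib]
  apply Subalgebra.prod_mem
  intro j _
  by_cases hj : j = j0
  · subst hj
    rcases le_total (J j0) (I j0) with h | h
    · obtain ⟨k, hk⟩ := hv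
      have hk0 : 0 ≤ k := by
        rcases le_or_gt 0 k with h' | h'
        · exact h'
        · exfalso
          have := mul_neg_of_pos_of_neg (by exact_mod_cast hm.trans_le' (by norm_num) : (0:ℤ) < m) h'
          omega
      have hk2 : ((m * k.toNat : ℕ) : ℤ) = (I j0 : ℤ) - J j0 := by
        push_cast
        rw [Int.toNat_of_nonneg hk0]
        linarith
      have hI : I j0 = J j0 + m * k.toNat := by omega
      have heq : (X (Sum.inl j0) : MvPolynomial (Fin n ⊕ Fin n) ℂ) ^ I j0
            * X (Sum.inr j0) ^ J j0
          = ((X (Sum.inl j0)) ^ m) ^ k.toNat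
            * ((X (Sum.inl j0)) * X (Sum.inr j0)) ^ J j0 := by
        rw [hI]; ring
      rw [heq]
      exact mul_mem (pow_mem (Algebra.subset_adjoin hz0) _)
        (pow_mem (Algebra.subset_adjoin (hzw j0)) _)
    · obtain ⟨k, hk⟩ := hv
      have hk0 : 0 ≤ -k := by
        rcases le_or_gt 0 (-k) with h' | h'
        · exact h'
        · exfalso
          have := mul_pos (by exact_mod_cast hm.trans_le' (by norm_num) : (0:ℤ) < m) (by omega : 0 < k)
          omega
      have hk2 : ((m * (-k).toNat : ℕ) : ℤ) = (J j0 : ℤ) - I j0 := by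
        push_cast
        rw [Int.toNat_of_nonneg hk0]
        linarith
      have hJ : J j0 = I j0 + m * (-k).toNat := by omega
      have heq : (X (Sum.inl j0) : MvPolynomial (Fin n ⊕ Fin n) ℂ) ^ I j0
            * X (Sum.inr j0) ^ J j0
          = ((X (Sum.inr j0)) ^ m) ^ (-k).toNat
            * ((X (Sum.inl j0)) * X (Sum.inr j0)) ^ I j0 := by
        rw [hJ]; ring
      rw [heq]
      exact mul_mem (pow_mem (Algebra.subset_adjoin hw0) _)
        (pow_mem (Algebra.subset_adjoin (hzw j0)) _)
  · have hz : (X (Sum.inl j) : MvPolynomial (Fin n ⊕ Fin n) ℂ) ∈ S :=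
      Or.inr ⟨j, hj, Or.inl rfl⟩
    have hw : (X (Sum.inr j) : MvPolynomial (Fin n ⊕ Fin n) ℂ) ∈ S :=
      Or.inr ⟨j, hj, Or.inr rfl⟩
    exact mul_mem (pow_mem (Algebra.subset_adjoin hz) _)
      (pow_mem (Algebra.subset_adjoin hw) _)
end
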